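/- arXiv:2306.16421 — 2 statements merged into one kernel-verified Lean document; each statement's English description precedes it below -/
import Mathlib

section
/- Let R be a nearfield and D ⊆ R^n a set of simple vectors (vectors of weight one or two). Then D^⊥ = { x ∈ R^n : ⟨e,x⟩ = 0 for all e ∈ D } is an R-subgroup of R^n, where ⟨x,y⟩ = Σ_{i=1}^n x_i·y_i. -/
open scoped BigOperators

/-- A (left) nearfield: a zero-symmetric (left) nearring whose nonzero
elements form a multiplicative group. The additive group is abelian. -/
class Nearfield (R : Type*) extends AddCommGroup R, One R, Mul R, Inv R where
  protected mul_assoc : ∀ a b c : R, a * b * c = a * (b * c)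
  protected left_distrib : ∀ a b c : R, a * (b + c) = a * b + a * c
  protected zero_mul : ∀ a : R, (0 : R) * a = 0
  protected mul_zero : ∀ a : R, a * (0 : R) = 0
  protected one_mul : ∀ a : R, (1 : R) * a = a
  protected mul_one : ∀ a : R, a * (1 : R) = a
  protected one_ne_zero : (1 : R) ≠ 0
  protected mul_inv_cancel : ∀ a : R, a ≠ 0 → a * a⁻¹ = 1
  protected inv_mul_cancel : ∀ a : R, a ≠ 0 → a⁻¹ * a = 1

namespace Nearfield

/-- A nearfield is proper if it is not a skewfield (right distributivity fails). -/
def IsProper (R : Type*) [Nearfield R] : Prop :=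
  ∃ a b c : R, (a + b) * c ≠ a * c + b * c

variable {R : Type*} [Nearfield R]

/-- Right scalar multiplication on `R^n`, applied coordinatewise. -/
def vsmul {n : ℕ} (v : Fin n → R) (r : R) : Fin n → R := fun i => v i * r

/-- An `R`-subgroup of `R^n`: an additive subgroup closed under right scalar
multiplication. -/
def IsRSubgroup {n : ℕ} (H : Set (Fin n → R)) : Prop :=
  (0 : Fin n → R) ∈ H ∧ (∀ x ∈ H, ∀ y ∈ H, x + y ∈ H) ∧
    (∀ x ∈ H, -x ∈ H) ∧ (∀ x ∈ H, ∀ r : R, vsmul x r ∈ H)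

/-- `gen S` is the smallest `R`-subgroup containing `S`. -/
def gen {n : ℕ} (S : Set (Fin n → R)) : Set (Fin n → R) :=
  ⋂₀ {H : Set (Fin n → R) | IsRSubgroup H ∧ S ⊆ H}

/-- The support of a vector. -/
def supp {n : ℕ} (u : Fin n → R) : Set (Fin n) := {i | u i ≠ 0}

/-- `dirSum u = { Σ_i u_i r_i : r_i ∈ R }`. -/
def dirSum {n ℓ : ℕ} (u : Fin ℓ → Fin n → R) : Set (Fin n → R) :=
  {v | ∃ r : Fin ℓ → R, v = ∑ i, vsmul (u i) (r i)}

/-- The "scalar product" `⟨x,y⟩ = Σ_i x_i·y_i`. -/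
def dot {n : ℕ} (x y : Fin n → R) : R := ∑ i, x i * y i

/-- The weight of a vector: the number of its nonzero coordinates. -/
noncomputable def weight {n : ℕ} (u : Fin n → R) : ℕ := (supp u).ncard

/-- A vector is simple if it has weight one or two. -/
def IsSimple {n : ℕ} (u : Fin n → R) : Prop := weight u = 1 ∨ weight u = 2

/-- The orthogonal set `D^⊥`. -/
def perp {n : ℕ} (D : Set (Fin n → R)) : Set (Fin n → R) :=
  {x | ∀ e ∈ D, dot e x = 0}

/-- `c(k,R)`: nonzero vectors of `R^k` whose first nonzero coordinate is `1`. -/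
def cSet (R : Type*) [Nearfield R] (k : ℕ) : Set (Fin k → R) :=
  {u | ∃ i : Fin k, u i = 1 ∧ ∀ j : Fin k, j < i → u j = 0}

/-- The seed number of `T`: the least size of a set generating `T`. -/
noncomputable def seed {n : ℕ} (T : Set (Fin n → R)) : ℕ :=
  sInf {k | ∃ S : Finset (Fin n → R), S.card = k ∧ gen (↑S : Set (Fin n → R)) = T}

/-- Iterated linear-combination closures. -/
def LC {n : ℕ} (S : Set (Fin n → R)) : ℕ → Set (Fin n → R)
  | 0 => S
  | m + 1 => {v | ∃ (ℓ : ℕ) (w : Fin ℓ → Fin n → R) (lam : Fin ℓ → R),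
      (∀ i, w i ∈ LC S m) ∧ v = ∑ i, vsmul (w i) (lam i)}

end Nearfield

/-- Stirling numbers of the second kind. -/
def stirling2 : ℕ → ℕ → ℕ
  | 0, 0 => 1
  | 0, _ + 1 => 0
  | _ + 1, 0 => 0
  | n + 1, k + 1 => (k + 1) * stirling2 n (k + 1) + stirling2 n k

open Nearfield

/-!
Additivity and closure under negation of `D^⊥` only need left distributivity. For right scalar
multiplication, a simple `e` turns `⟨e, x⟩ = 0` into `a + b = 0` with `a = e_i x_i`, `b = e_j x_j`
(or `a = 0`), and `⟨e, x r⟩ = a r + b r`. Right distributivity is not available, but `b = -a` and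
`(-a) r = -(a r)` holds in every nearfield.
-/

namespace Nearfield

variable {R : Type*} [Nearfield R]

protected theorem mul_neg (a b : R) : a * -b = -(a * b) :=
  eq_neg_of_add_eq_zero_right <| by
    rw [← Nearfield.left_distrib, add_neg_cancel, Nearfield.mul_zero]

protected theorem neg_one_mul (r : R) : (-1 : R) * r = -r := by
  by_contra hne
  set u : R := (-1 : R) * r + r with hu
  have hu0 : u ≠ 0 := fun h => hne (eq_neg_of_add_eq_zero_left h)
  have hneg_one_sq : (-1 : R) * (-1) = 1 := by
    rw [Nearfield.mul_neg, Nearfield.mul_one, neg_neg]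
  have hfix : (-1 : R) * u = 1 * u := by
    rw [hu, Nearfield.left_distrib, ← Nearfield.mul_assoc, hneg_one_sq, Nearfield.one_mul,
      Nearfield.one_mul, add_comm]
  -- `u ≠ 0` is right-cancellable, so `-1 = 1`, the characteristic is 2 and `u = r + r = 0`.
  have hneg_one : (-1 : R) = 1 := by
    have h := congrArg (· * u⁻¹) hfix
    simpa only [Nearfield.mul_assoc, Nearfield.mul_inv_cancel u hu0, Nearfield.mul_one] using h
  have htwo : r + r = 0 :=
    calc r + r = r * (1 + 1) := by rw [Nearfield.left_distrib, Nearfield.mul_one]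
      _ = r * (-1 + 1) := by rw [hneg_one]
      _ = 0 := by rw [neg_add_cancel, Nearfield.mul_zero]
  exact hu0 (by rw [hu, hneg_one, Nearfield.one_mul, htwo])

protected theorem neg_mul (a b : R) : -a * b = -(a * b) := by
  rw [← Nearfield.mul_one a, ← Nearfield.mul_neg, Nearfield.mul_assoc, Nearfield.neg_one_mul,
    Nearfield.mul_neg, Nearfield.mul_one]

theorem sum_mul_eq_zero_of_card_le_two {ι : Type*} {s : Finset ι} (hs : s.card ≤ 2)
    {f : ι → R} (hf : ∑ i ∈ s, f i = 0) (r : R) : ∑ i ∈ s, f i * r = 0 := by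
  classical
  obtain h | h | h : s.card = 0 ∨ s.card = 1 ∨ s.card = 2 := by omega
  · rw [Finset.card_eq_zero.mp h, Finset.sum_empty]
  · obtain ⟨i, rfl⟩ := Finset.card_eq_one.mp h
    rw [Finset.sum_singleton] at hf ⊢
    rw [hf, Nearfield.zero_mul]
  · obtain ⟨i, j, hij, hs⟩ := Finset.card_eq_two.mp h
    rw [hs, Finset.sum_pair hij] at hf ⊢
    rw [eq_neg_of_add_eq_zero_right hf, Nearfield.neg_mul, add_neg_cancel]

variable {n : ℕ}

theorem dot_zero_right (e : Fin n → R) : dot e 0 = 0 := by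
  simp only [dot, Pi.zero_apply, Nearfield.mul_zero, Finset.sum_const_zero]

theorem dot_add_right (e x y : Fin n → R) : dot e (x + y) = dot e x + dot e y := by
  simp only [dot, Pi.add_apply, Nearfield.left_distrib, Finset.sum_add_distrib]

theorem dot_neg_right (e x : Fin n → R) : dot e (-x) = -dot e x := by
  simp only [dot, Pi.neg_apply, Nearfield.mul_neg, Finset.sum_neg_distrib]

theorem dot_eq_sum_supp [DecidableEq R] (e x : Fin n → R) :
    dot e x = ∑ i with e i ≠ 0, e i * x i := by
  refine (Finset.sum_filter_of_ne (p := fun i => e i ≠ 0) fun i _ hi h0 => hi ?_).symm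
  rw [h0, Nearfield.zero_mul]

theorem dot_vsmul_eq_zero {e x : Fin n → R} (he : (supp e).ncard ≤ 2) (hx : dot e x = 0)
    (r : R) : dot e (vsmul x r) = 0 := by
  classical
  have hsupp : supp e = ↑(Finset.univ.filter fun i => e i ≠ 0) := by
    ext i
    simp [supp]
  rw [hsupp, Set.ncard_coe_finset] at he
  rw [dot_eq_sum_supp] at hx ⊢
  simp only [vsmul, ← Nearfield.mul_assoc]
  exact sum_mul_eq_zero_of_card_le_two he hx r

theorem IsSimple.ncard_supp_le_two {e : Fin n → R} (he : IsSimple e) : (supp e).ncard ≤ 2 := by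
  rcases he with h | h <;> rw [weight] at h <;> omega

end Nearfield

/-- If `D` is a set of simple vectors, then `D^⊥` is an `R`-subgroup of `R^n`. -/
theorem perp_isRSubgroup {R : Type*} [Nearfield R] {n : ℕ}
    (D : Set (Fin n → R)) (hD : ∀ e ∈ D, IsSimple e) :
    IsRSubgroup (perp D) := by
  refine ⟨fun e _ => dot_zero_right e, ?_, ?_, ?_⟩
  · intro x hx y hy e he
    rw [dot_add_right, hx e he, hy e he, add_zero]
  · intro x hx e he
    rw [dot_neg_right, hx e he, neg_zero]
  · intro x hx r e he
    exact dot_vsmul_eq_zero (hD e he).ncard_supp_le_two (hx e he) r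
end

section
/- Let R be a finite proper nearfield with |R| = q. The number of R-subgroups of R^n of dimension ℓ equals Σ_{d=0}^{n−ℓ} C(n,d) · S(n−d, ℓ) · (q−1)^{n−d−ℓ}, where C denotes binomial coefficients and S denotes Stirling numbers of the second kind. -/
open scoped BigOperators

open Nearfield

/-!
Rescaling each generator `u_i` of `T = ⊕ u_i R` so that its first nonzero entry is `1` gives a
canonical generating family of `T`: a normalized element of `T` whose support is that of a
generator is that generator. So the `ℓ`-dimensional subgroups of `R^n` correspond to the
`ℓ`-element families of normalized vectors with pairwise disjoint supports. Such a family over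
`n + 1` coordinates either avoids the last coordinate, contains the last unit vector, or uses the
last coordinate in exactly one of its vectors, with one of `q - 1` nonzero values. Hence their
number `N(n, ℓ)` satisfies `N(n+1, ℓ+1) = N(n, ℓ+1) + N(n, ℓ) + (ℓ+1)(q-1) N(n, ℓ+1)`, and
Pascal's rule together with the Stirling recursion shows that the closed form obeys the same
recursion.
-/

lemma stirling2_eq_stirlingSecond : stirling2 = Nat.stirlingSecond := by
  funext n k
  induction n generalizing k with
  | zero => cases k <;> rfl
  | succ n ih => cases k <;> simp [stirling2, Nat.stirlingSecond_succ_succ, ih]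

section ClosedForm

open Finset Nat

def closedForm (q n ℓ : ℕ) : ℕ :=
  ∑ d ∈ range (n + 1), n.choose d * (stirlingSecond (n - d) ℓ * q ^ (n - d - ℓ))

lemma sum_range_sub_add_one_eq_closedForm (q n ℓ : ℕ) :
    ∑ d ∈ range (n - ℓ + 1), n.choose d * stirlingSecond (n - d) ℓ * q ^ (n - d - ℓ) =
      closedForm q n ℓ := by
  refine sum_subset_zero_on_sdiff (range_subset_range.mpr (by omega)) (fun d hd => ?_)
    (fun d _ => mul_assoc _ _ _)
  rw [mem_sdiff, mem_range, mem_range] at hd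
  rw [stirlingSecond_eq_zero_of_lt (by omega), zero_mul, mul_zero]

lemma closedForm_succ (q n ℓ : ℕ) :
    closedForm q (n + 1) ℓ =
      ∑ d ∈ range (n + 1), n.choose d * (stirlingSecond (n - d + 1) ℓ * q ^ (n - d + 1 - ℓ)) +
        closedForm q n ℓ := by
  have pascal := sum_choose_succ_mul (fun _ j => stirlingSecond j ℓ * q ^ (j - ℓ)) n
  simp only [Nat.cast_id] at pascal
  rw [closedForm, pascal, closedForm]
  congr 1
  refine sum_congr rfl fun d hd => ?_
  rw [mem_range] at hd
  rw [show n + 1 - d = n - d + 1 by omega]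

lemma closedForm_zero_right (q n : ℕ) : closedForm q n 0 = 1 := by
  induction n with
  | zero => simp [closedForm]
  | succ n ih => simp [closedForm_succ, ih]

lemma closedForm_zero_succ (q ℓ : ℕ) : closedForm q 0 (ℓ + 1) = 0 := by
  simp [closedForm]

lemma stirlingSecond_mul_pow_succ_succ (q j ℓ : ℕ) :
    stirlingSecond (j + 1) (ℓ + 1) * q ^ (j + 1 - (ℓ + 1)) =
      (ℓ + 1) * q * (stirlingSecond j (ℓ + 1) * q ^ (j - (ℓ + 1))) +
        stirlingSecond j ℓ * q ^ (j - ℓ) := by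
  rw [stirlingSecond_succ_succ, Nat.add_sub_add_right]
  rcases lt_or_ge j (ℓ + 1) with hj | hj
  · rw [stirlingSecond_eq_zero_of_lt hj]
    ring
  · rw [show j - ℓ = j - (ℓ + 1) + 1 by omega, pow_succ]
    ring

lemma closedForm_succ_succ (q n ℓ : ℕ) :
    closedForm q (n + 1) (ℓ + 1) =
      closedForm q n (ℓ + 1) + closedForm q n ℓ + closedForm q n (ℓ + 1) * (ℓ + 1) * q := by
  rw [closedForm_succ]
  simp only [closedForm, sum_mul, ← sum_add_distrib]
  refine sum_congr rfl fun d _ => ?_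
  rw [stirlingSecond_mul_pow_succ_succ]
  ring

end ClosedForm

namespace Nearfield

section ExtendFamily

variable {R : Type*} {n : ℕ}

def extendFamily (S : Finset (Fin n → R)) (f : (Fin n → R) → R) : Finset (Fin (n + 1) → R) :=
  S.map ⟨fun x => Fin.snoc x (f x), fun x y h => by simpa using congrArg Fin.init h⟩

lemma mem_extendFamily {S : Finset (Fin n → R)} {f : (Fin n → R) → R} {u : Fin (n + 1) → R} :
    u ∈ extendFamily S f ↔ ∃ x ∈ S, Fin.snoc x (f x) = u :=
  Finset.mem_map

@[simp]
lemma card_extendFamily (S : Finset (Fin n → R)) (f : (Fin n → R) → R) :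
    (extendFamily S f).card = S.card :=
  Finset.card_map _

open scoped Classical in
lemma image_init_extendFamily (S : Finset (Fin n → R)) (f : (Fin n → R) → R) :
    (extendFamily S f).image Fin.init = S := by
  ext x
  simp [mem_extendFamily]

open scoped Classical in
lemma extendFamily_image_init {S : Finset (Fin (n + 1) → R)} {f : (Fin n → R) → R}
    (h : ∀ u ∈ S, u (Fin.last n) = f (Fin.init u)) : extendFamily (S.image Fin.init) f = S := by
  ext u
  simp only [mem_extendFamily, Finset.mem_image, exists_exists_and_eq_and]
  constructor
  · rintro ⟨v, hv, rfl⟩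
    rwa [← h v hv, Fin.snoc_init_self]
  · exact fun hu => ⟨u, hu, by rw [← h u hu, Fin.snoc_init_self]⟩

end ExtendFamily

variable {R : Type*} [Nearfield R]

-- Only a local instance: globally, it would change the `Zero R` instance through which statements
-- mentioning `0 : R` elaborate.
abbrev monoidWithZero : MonoidWithZero R where
  mul_assoc := Nearfield.mul_assoc
  one_mul := Nearfield.one_mul
  mul_one := Nearfield.mul_one
  zero_mul := Nearfield.zero_mul
  mul_zero := Nearfield.mul_zero

attribute [local instance] monoidWithZero

theorem nontrivial : Nontrivial R := ⟨⟨0, 1, Nearfield.one_ne_zero.symm⟩⟩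

theorem noZeroDivisors : NoZeroDivisors R where
  eq_zero_or_eq_zero_of_mul_eq_zero {a b} h := by
    refine or_iff_not_imp_left.mpr fun ha => ?_
    rw [← one_mul b, ← Nearfield.inv_mul_cancel a ha, mul_assoc, h, mul_zero]

attribute [local instance] nontrivial noZeroDivisors

section Vectors

variable {n : ℕ}

@[simp]
lemma mem_supp {v : Fin n → R} {i : Fin n} : i ∈ supp v ↔ v i ≠ 0 := Iff.rfl

lemma disjoint_supp_self {v : Fin n → R} : Disjoint (supp v) (supp v) ↔ v = 0 := by
  rw [disjoint_self, Set.bot_eq_empty, ← Set.not_nonempty_iff_eq_empty, ← not_ne_iff,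
    Function.ne_iff]
  rfl

@[simp]
lemma vsmul_apply (v : Fin n → R) (r : R) (i : Fin n) : vsmul v r i = v i * r := rfl

lemma vsmul_vsmul (v : Fin n → R) (a b : R) : vsmul (vsmul v a) b = vsmul v (a * b) :=
  funext fun _ => mul_assoc _ _ _

lemma supp_vsmul (v : Fin n → R) {c : R} (hc : c ≠ 0) : supp (vsmul v c) = supp v := by
  ext i
  simp [hc]

lemma ne_zero_of_mem_cSet {v : Fin n → R} (hv : v ∈ cSet R n) : v ≠ 0 := by
  rintro rfl
  obtain ⟨_, h, _⟩ := hv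
  exact one_ne_zero h.symm

lemma exists_vsmul_mem_cSet {v : Fin n → R} (hv : v ≠ 0) : ∃ c ≠ 0, vsmul v c ∈ cSet R n := by
  obtain ⟨i, hi, hmin⟩ := wellFounded_lt.has_min (supp v) (Function.ne_iff.mp hv)
  have hinv : v i * (v i)⁻¹ = 1 := Nearfield.mul_inv_cancel _ hi
  refine ⟨(v i)⁻¹, fun h => ?_, i, hinv, fun j hj => ?_⟩
  · rw [h, mul_zero] at hinv
    exact zero_ne_one hinv
  · rw [vsmul_apply, not_not.mp fun h => hmin j h hj, zero_mul]

lemma lead_eq_of_supp_eq {u v : Fin n → R} {i j : Fin n} (hi : u i = 1) (hu : ∀ k < i, u k = 0)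
    (hj : v j = 1) (hv : ∀ k < j, v k = 0) (h : supp u = supp v) : i = j := by
  have hmem : ∀ {w : Fin n → R} {k}, w k = 1 → k ∈ supp w := fun hk => by simp [hk]
  rcases lt_trichotomy i j with hij | rfl | hij
  · exact ((show i ∈ supp v from h ▸ hmem hi) (hv i hij)).elim
  · rfl
  · exact ((show j ∈ supp u from h ▸ hmem hj) (hu j hij)).elim

lemma apply_eq_zero_of_ne {S : Finset (Fin n → R)}
    (hS : (S : Set (Fin n → R)).PairwiseDisjoint supp) {u v : Fin n → R} (hu : u ∈ S)
    (hv : v ∈ S) (huv : u ≠ v) {k : Fin n} (hk : u k ≠ 0) : v k = 0 :=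
  not_not.mp fun hvk => Set.disjoint_left.mp (hS hu hv huv) hk hvk

end Vectors

section DirSumFinset

variable {n : ℕ}

def dirSumFinset (S : Finset (Fin n → R)) : Set (Fin n → R) :=
  {x | ∃ r : (Fin n → R) → R, x = ∑ w ∈ S, vsmul w (r w)}

lemma dirSumFinset_map_univ {ℓ : ℕ} (u : Fin ℓ ↪ (Fin n → R)) :
    dirSumFinset (Finset.univ.map u) = dirSum u := by
  ext x
  simp only [dirSumFinset, dirSum, Set.mem_ofPred_eq, Finset.sum_map]
  constructor
  · rintro ⟨r, rfl⟩
    exact ⟨r ∘ u, rfl⟩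
  · rintro ⟨r, rfl⟩
    exact ⟨Function.extend u r 0, by simp only [u.injective.extend_apply]⟩

lemma dirSum_vsmul {ℓ : ℕ} (u : Fin ℓ → Fin n → R) {c : Fin ℓ → R} (hc : ∀ i, c i ≠ 0) :
    dirSum (fun i => vsmul (u i) (c i)) = dirSum u := by
  ext x
  constructor
  · rintro ⟨r, rfl⟩
    exact ⟨fun i => c i * r i, by simp only [vsmul_vsmul]⟩
  · rintro ⟨r, rfl⟩
    refine ⟨fun i => (c i)⁻¹ * r i, Finset.sum_congr rfl fun i _ => ?_⟩
    rw [vsmul_vsmul, ← mul_assoc, Nearfield.mul_inv_cancel _ (hc i), one_mul]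

variable {S : Finset (Fin n → R)}

lemma mem_dirSumFinset_of_mem {v : Fin n → R} (hv : v ∈ S) : v ∈ dirSumFinset S := by
  classical
  refine ⟨Pi.single v 1, ?_⟩
  rw [Finset.sum_eq_single v (fun w _ hw => ?_) (absurd hv)]
  · exact funext fun k => by simp
  · exact funext fun k => by simp [hw]

lemma sum_vsmul_apply_of_apply_ne_zero (hS : (S : Set (Fin n → R)).PairwiseDisjoint supp)
    (r : (Fin n → R) → R) {w : Fin n → R} (hw : w ∈ S) {k : Fin n} (hk : w k ≠ 0) :
    (∑ v ∈ S, vsmul v (r v)) k = w k * r w := by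
  rw [Finset.sum_apply, Finset.sum_eq_single w (fun v hv hvw => ?_) (absurd hw)]
  · rfl
  · rw [vsmul_apply, apply_eq_zero_of_ne hS hw hv hvw.symm hk, zero_mul]

lemma exists_apply_ne_zero_of_mem_dirSumFinset {x : Fin n → R} (hx : x ∈ dirSumFinset S)
    {k : Fin n} (hk : x k ≠ 0) : ∃ w ∈ S, w k ≠ 0 := by
  obtain ⟨r, rfl⟩ := hx
  by_contra! h
  refine hk ?_
  rw [Finset.sum_apply]
  exact Finset.sum_eq_zero fun w hw => by rw [vsmul_apply, h w hw, zero_mul]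

lemma supp_subset_of_mem_dirSumFinset (hS : (S : Set (Fin n → R)).PairwiseDisjoint supp)
    {x w : Fin n → R} (hx : x ∈ dirSumFinset S) (hw : w ∈ S) {j : Fin n} (hwj : w j ≠ 0)
    (hxj : x j ≠ 0) : supp w ⊆ supp x := by
  obtain ⟨r, rfl⟩ := hx
  rw [sum_vsmul_apply_of_apply_ne_zero hS r hw hwj] at hxj
  intro k hk
  rw [mem_supp, sum_vsmul_apply_of_apply_ne_zero hS r hw hk]
  exact mul_ne_zero hk (right_ne_zero_of_mul hxj)

end DirSumFinset

def IsNormalFamily {n : ℕ} (S : Finset (Fin n → R)) : Prop :=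
  (S : Set (Fin n → R)) ⊆ cSet R n ∧ (S : Set (Fin n → R)).PairwiseDisjoint supp

namespace IsNormalFamily

variable {n : ℕ} {S S' : Finset (Fin n → R)}

lemma mono (hS : IsNormalFamily S) (h : S' ⊆ S) : IsNormalFamily S' :=
  ⟨(Finset.coe_subset.mpr h).trans hS.1, hS.2.subset (Finset.coe_subset.mpr h)⟩

lemma eq_of_mem_dirSumFinset (hS : IsNormalFamily S) {v x : Fin n → R} (hv : v ∈ S)
    (hx : x ∈ dirSumFinset S) (hxc : x ∈ cSet R n) (h : supp x = supp v) : x = v := by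
  obtain ⟨i, hxi, hxlt⟩ := hxc
  obtain ⟨j, hvj, hvlt⟩ := hS.1 hv
  obtain rfl := lead_eq_of_supp_eq hxi hxlt hvj hvlt h
  obtain ⟨r, rfl⟩ := hx
  have hvi : v i ≠ 0 := by simp [hvj]
  have hr : r v = 1 := by
    rwa [sum_vsmul_apply_of_apply_ne_zero hS.2 r hv hvi, hvj, one_mul] at hxi
  funext k
  by_cases hk : v k = 0
  · rw [hk]
    exact not_not.mp fun hxk => (show k ∈ supp v from h ▸ hxk) hk
  · rw [sum_vsmul_apply_of_apply_ne_zero hS.2 r hv hk, hr, mul_one]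

lemma subset_of_dirSumFinset_eq (hS : IsNormalFamily S) (hS' : IsNormalFamily S')
    (h : dirSumFinset S = dirSumFinset S') : S ⊆ S' := by
  intro v hv
  obtain ⟨j, hvj, -⟩ := hS.1 hv
  have hvj0 : v j ≠ 0 := by simp [hvj]
  have hvS' : v ∈ dirSumFinset S' := h ▸ mem_dirSumFinset_of_mem hv
  obtain ⟨w, hw, hwj⟩ := exists_apply_ne_zero_of_mem_dirSumFinset hvS' hvj0
  have hwS : w ∈ dirSumFinset S := h ▸ mem_dirSumFinset_of_mem hw
  have hsupp : supp w = supp v :=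
    (supp_subset_of_mem_dirSumFinset hS'.2 hvS' hw hwj hvj0).antisymm
      (supp_subset_of_mem_dirSumFinset hS.2 hwS hv hvj0 hwj)
  rwa [← hS.eq_of_mem_dirSumFinset hv hwS (hS'.1 hw) hsupp]

lemma exists_dirSum_eq {ℓ : ℕ} (hS : IsNormalFamily S) (hcard : S.card = ℓ) :
    ∃ u : Fin ℓ → Fin n → R, (∀ i, u i ≠ 0) ∧
      (∀ i j, i ≠ j → supp (u i) ∩ supp (u j) = ∅) ∧ dirSumFinset S = dirSum u := by
  let e := S.equivFinOfCardEq hcard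
  let u : Fin ℓ ↪ (Fin n → R) := e.symm.toEmbedding.trans (Function.Embedding.subtype _)
  have hmap : Finset.univ.map u = S := by
    ext v
    simp only [Finset.mem_map, Finset.mem_univ, true_and]
    exact ⟨fun ⟨i, hi⟩ => hi ▸ (e.symm i).2, fun hv => ⟨e ⟨v, hv⟩, by simp [u]⟩⟩
  refine ⟨u, fun i => ne_zero_of_mem_cSet (hS.1 (e.symm i).2), fun i j hij => ?_, ?_⟩
  · exact Set.disjoint_iff_inter_eq_empty.mp (hS.2 (e.symm i).2 (e.symm j).2 (u.injective.ne hij))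
  · rw [← dirSumFinset_map_univ, hmap]

end IsNormalFamily

lemma dirSumFinset_injOn {n : ℕ} :
    Set.InjOn dirSumFinset {S : Finset (Fin n → R) | IsNormalFamily S} :=
  fun _ hS _ hS' h =>
    (hS.subset_of_dirSumFinset_eq hS' h).antisymm (hS'.subset_of_dirSumFinset_eq hS h.symm)

lemma exists_isNormalFamily_dirSumFinset_eq {n ℓ : ℕ} {u : Fin ℓ → Fin n → R}
    (hu : ∀ i, u i ≠ 0) (hdisj : ∀ i j, i ≠ j → supp (u i) ∩ supp (u j) = ∅) :
    ∃ S : Finset (Fin n → R), (S.card = ℓ ∧ IsNormalFamily S) ∧ dirSumFinset S = dirSum u := by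
  choose c hc hcu using fun i => exists_vsmul_mem_cSet (hu i)
  set u' := fun i => vsmul (u i) (c i)
  have hdisj' : Pairwise fun i j => Disjoint (supp (u' i)) (supp (u' j)) := fun i j hij => by
    simpa only [u', supp_vsmul _ (hc _), Set.disjoint_iff_inter_eq_empty] using hdisj i j hij
  have hinj : Function.Injective u' := fun i j h => by
    by_contra hij
    have hdisj_ij : Disjoint (supp (u' i)) (supp (u' j)) := hdisj' hij
    rw [h, disjoint_supp_self] at hdisj_ij
    exact ne_zero_of_mem_cSet (hcu j) hdisj_ij
  refine ⟨Finset.univ.map ⟨u', hinj⟩, ⟨by simp, ?_, ?_⟩, ?_⟩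
  · simpa [Set.range_subset_iff] using hcu
  · rw [Finset.coe_map, Finset.coe_univ, Set.image_univ]
    rintro _ ⟨i, rfl⟩ _ ⟨j, rfl⟩ hne
    exact hdisj' fun h => hne (h ▸ rfl)
  · exact (dirSumFinset_map_univ _).trans (dirSum_vsmul u hc)

lemma setOf_exists_dirSum_eq_image_dirSumFinset (n ℓ : ℕ) :
    {T : Set (Fin n → R) | ∃ u : Fin ℓ → Fin n → R,
        (∀ i, u i ≠ 0) ∧ (∀ i j, i ≠ j → supp (u i) ∩ supp (u j) = ∅) ∧ T = dirSum u} =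
      dirSumFinset '' {S | S.card = ℓ ∧ IsNormalFamily S} := by
  ext T
  constructor
  · rintro ⟨u, hu, hdisj, rfl⟩
    exact exists_isNormalFamily_dirSumFinset_eq hu hdisj
  · rintro ⟨S, ⟨hcard, hS⟩, rfl⟩
    exact hS.exists_dirSum_eq hcard

section LastCoordinate

variable {n : ℕ}

lemma snoc_mem_cSet_iff {x : Fin n → R} {c : R} :
    (Fin.snoc x c : Fin (n + 1) → R) ∈ cSet R (n + 1) ↔ x ∈ cSet R n ∨ (x = 0 ∧ c = 1) := by
  simp [cSet, Fin.exists_fin_succ', Fin.forall_fin_succ', funext_iff,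
    Fin.castSucc_lt_castSucc_iff, Fin.castSucc_lt_last, not_lt_of_ge (Fin.le_last _), and_comm]

lemma disjoint_supp_snoc_iff {x y : Fin n → R} {c d : R} :
    Disjoint (supp (Fin.snoc x c : Fin (n + 1) → R)) (supp (Fin.snoc y d)) ↔
      Disjoint (supp x) (supp y) ∧ (c = 0 ∨ d = 0) := by
  simp only [Set.disjoint_left, mem_supp, Fin.forall_fin_succ', Fin.snoc_castSucc, Fin.snoc_last]
  tauto

lemma init_mem_cSet {u : Fin (n + 1) → R} (hu : u ∈ cSet R (n + 1)) (he : u ≠ Fin.snoc 0 1) :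
    Fin.init u ∈ cSet R n := by
  rw [← Fin.snoc_init_self u, snoc_mem_cSet_iff] at hu
  refine hu.resolve_right fun ⟨h0, h1⟩ => he ?_
  rw [← Fin.snoc_init_self u, h0, h1]

lemma disjoint_supp_init {u v : Fin (n + 1) → R} (h : Disjoint (supp u) (supp v)) :
    Disjoint (supp (Fin.init u)) (supp (Fin.init v)) := by
  rw [← Fin.snoc_init_self u, ← Fin.snoc_init_self v, disjoint_supp_snoc_iff] at h
  exact h.1

lemma snoc_zero_one_notMem_extendFamily {S : Finset (Fin n → R)} (hS : (S : Set _) ⊆ cSet R n)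
    (f : (Fin n → R) → R) : (Fin.snoc 0 1 : Fin (n + 1) → R) ∉ extendFamily S f := by
  intro h
  obtain ⟨x, hx, hx0⟩ := mem_extendFamily.mp h
  exact ne_zero_of_mem_cSet (hS hx) (by simpa using congrArg Fin.init hx0)

lemma isNormalFamily_extendFamily {S : Finset (Fin n → R)} {f : (Fin n → R) → R}
    (hS : IsNormalFamily S) (hf : ∀ x ∈ S, ∀ y ∈ S, x ≠ y → f x = 0 ∨ f y = 0) :
    IsNormalFamily (extendFamily S f) := by
  refine ⟨fun u hu => ?_, fun u hu v hv huv => ?_⟩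
  · obtain ⟨x, hx, rfl⟩ := mem_extendFamily.mp hu
    exact snoc_mem_cSet_iff.mpr (Or.inl (hS.1 hx))
  · obtain ⟨x, hx, rfl⟩ := mem_extendFamily.mp hu
    obtain ⟨y, hy, rfl⟩ := mem_extendFamily.mp hv
    have hxy : x ≠ y := fun h => huv (h ▸ rfl)
    exact disjoint_supp_snoc_iff.mpr ⟨hS.2 hx hy hxy, hf x hx y hy hxy⟩

lemma IsNormalFamily.injOn_init {S : Finset (Fin (n + 1) → R)} (hS : IsNormalFamily S)
    (he : Fin.snoc 0 1 ∉ S) : Set.InjOn Fin.init (S : Set (Fin (n + 1) → R)) := by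
  intro u hu v hv h
  by_contra huv
  have hdisj := disjoint_supp_init (hS.2 hu hv huv)
  rw [h, disjoint_supp_self] at hdisj
  exact ne_zero_of_mem_cSet (init_mem_cSet (hS.1 hv) fun h => he (h ▸ hv)) hdisj

open scoped Classical in
lemma IsNormalFamily.image_init {S : Finset (Fin (n + 1) → R)} (hS : IsNormalFamily S)
    (he : Fin.snoc 0 1 ∉ S) : IsNormalFamily (S.image Fin.init) := by
  refine ⟨fun x hx => ?_, fun x hx y hy hxy => ?_⟩
  · obtain ⟨u, hu, rfl⟩ := Finset.mem_image.mp hx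
    exact init_mem_cSet (hS.1 hu) fun h => he (h ▸ hu)
  · obtain ⟨u, hu, rfl⟩ := Finset.mem_image.mp hx
    obtain ⟨v, hv, rfl⟩ := Finset.mem_image.mp hy
    exact disjoint_supp_init (hS.2 hu hv fun h => hxy (h ▸ rfl))

open scoped Classical in
lemma extendFamily_ite_inj {S S' : Finset (Fin n → R)} {w w' : Fin n → R} {c c' : R}
    (hw : w ∈ S) (hc : c ≠ 0)
    (h : extendFamily S (fun x => if x = w then c else 0) =
      extendFamily S' (fun x => if x = w' then c' else 0)) :
    S = S' ∧ w = w' ∧ c = c' := by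
  obtain rfl : S = S' := by
    rw [← image_init_extendFamily S _, h, image_init_extendFamily]
  have hwc : Fin.snoc w c ∈ extendFamily S fun x => if x = w' then c' else 0 :=
    h ▸ mem_extendFamily.mpr ⟨w, hw, by simp⟩
  obtain ⟨x, -, hx⟩ := mem_extendFamily.mp hwc
  obtain rfl : x = w := by simpa using congrArg Fin.init hx
  have hc' : (if x = w' then c' else 0) = c := by simpa using congrFun hx (Fin.last n)
  obtain rfl : x = w' := not_not.mp fun hne => hc (by rw [← hc', if_neg hne])
  exact ⟨rfl, rfl, by rw [← hc', if_pos rfl]⟩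

open scoped Classical in
lemma IsNormalFamily.extendFamily_image_init_ite {S : Finset (Fin (n + 1) → R)}
    (hS : IsNormalFamily S) (he : Fin.snoc 0 1 ∉ S) {u : Fin (n + 1) → R} (hu : u ∈ S)
    (hlast : u (Fin.last n) ≠ 0) :
    extendFamily (S.image Fin.init) (fun x => if x = Fin.init u then u (Fin.last n) else 0) =
      S := by
  refine extendFamily_image_init fun v hv => ?_
  by_cases hvu : v = u
  · simp [hvu]
  · rw [if_neg fun h => hvu (hS.injOn_init he hv hu h)]
    exact apply_eq_zero_of_ne hS.2 hu hv (Ne.symm hvu) hlast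

end LastCoordinate

section Counting

open Finset
open scoped Classical

variable [Fintype R] {n : ℕ}

variable (R) in
noncomputable def normalFamilies (n ℓ : ℕ) : Finset (Finset (Fin n → R)) :=
  {S | S.card = ℓ ∧ IsNormalFamily S}

lemma mem_normalFamilies {ℓ : ℕ} {S : Finset (Fin n → R)} :
    S ∈ normalFamilies R n ℓ ↔ S.card = ℓ ∧ IsNormalFamily S := by
  simp [normalFamilies]

lemma extendFamily_mem_normalFamilies {ℓ : ℕ} {S : Finset (Fin n → R)} {f : (Fin n → R) → R}
    (hS : S ∈ normalFamilies R n ℓ) (hf : ∀ x ∈ S, ∀ y ∈ S, x ≠ y → f x = 0 ∨ f y = 0) :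
    extendFamily S f ∈ normalFamilies R (n + 1) ℓ := by
  rw [mem_normalFamilies] at hS ⊢
  exact ⟨by rw [card_extendFamily, hS.1], isNormalFamily_extendFamily hS.2 hf⟩

lemma image_init_mem_normalFamilies {ℓ : ℕ} {S : Finset (Fin (n + 1) → R)}
    (hS : S ∈ normalFamilies R (n + 1) ℓ) (he : Fin.snoc 0 1 ∉ S) :
    S.image Fin.init ∈ normalFamilies R n ℓ := by
  rw [mem_normalFamilies] at hS ⊢
  exact ⟨by rw [card_image_of_injOn (hS.2.injOn_init he), hS.1], hS.2.image_init he⟩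

lemma card_filter_forall_last_eq_zero (ℓ : ℕ) :
    #{S ∈ normalFamilies R (n + 1) ℓ | ∀ u ∈ S, u (Fin.last n) = 0} =
      #(normalFamilies R n ℓ) := by
  refine card_nbij' (·.image Fin.init) (extendFamily · 0) (fun S hS => ?_) (fun S hS => ?_)
    (fun S hS => ?_) (fun S _ => image_init_extendFamily S 0)
  · rw [mem_coe, mem_filter] at hS
    exact image_init_mem_normalFamilies hS.1 fun he => absurd (hS.2 _ he) (by simp)
  · rw [mem_coe] at hS
    rw [mem_coe, mem_filter]
    refine ⟨extendFamily_mem_normalFamilies hS fun _ _ _ _ _ => Or.inl rfl, fun u hu => ?_⟩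
    obtain ⟨x, -, rfl⟩ := mem_extendFamily.mp hu
    simp
  · rw [mem_coe, mem_filter] at hS
    exact extendFamily_image_init hS.2

lemma insert_snoc_zero_one_mem_normalFamilies {ℓ : ℕ} {S : Finset (Fin n → R)}
    (hS : S ∈ normalFamilies R n ℓ) :
    insert (Fin.snoc 0 1) (extendFamily S 0) ∈ normalFamilies R (n + 1) (ℓ + 1) := by
  rw [mem_normalFamilies] at hS ⊢
  have hext := isNormalFamily_extendFamily hS.2 fun _ _ _ _ _ => Or.inl rfl
  rw [card_insert_of_notMem (snoc_zero_one_notMem_extendFamily hS.2.1 0), card_extendFamily,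
    hS.1]
  refine ⟨rfl, ?_, ?_⟩ <;> rw [coe_insert]
  · exact Set.insert_subset (snoc_mem_cSet_iff.mpr (Or.inr ⟨rfl, rfl⟩)) hext.1
  refine hext.2.insert fun v hv _ => ?_
  obtain ⟨x, -, rfl⟩ := mem_extendFamily.mp hv
  exact disjoint_supp_snoc_iff.mpr ⟨by simp [supp], Or.inr rfl⟩

lemma card_filter_snoc_zero_one_mem (ℓ : ℕ) :
    #{S ∈ normalFamilies R (n + 1) (ℓ + 1) | Fin.snoc 0 1 ∈ S} = #(normalFamilies R n ℓ) := by
  set e : Fin (n + 1) → R := Fin.snoc 0 1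
  refine card_nbij' (fun S => (S.erase e).image Fin.init) (fun S => insert e (extendFamily S 0))
    (fun S hS => ?_) (fun S hS => ?_) (fun S hS => ?_) (fun S hS => ?_)
  · rw [mem_coe, mem_filter, mem_normalFamilies] at hS
    refine image_init_mem_normalFamilies ?_ (notMem_erase e S)
    rw [mem_normalFamilies, card_erase_of_mem hS.2, hS.1.1]
    exact ⟨rfl, hS.1.2.mono (erase_subset e S)⟩
  · rw [mem_coe] at hS
    rw [mem_coe, mem_filter]
    exact ⟨insert_snoc_zero_one_mem_normalFamilies hS, mem_insert_self e _⟩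
  · rw [mem_coe, mem_filter, mem_normalFamilies] at hS
    refine (congrArg (insert e) (extendFamily_image_init fun u hu => ?_)).trans
      (insert_erase hS.2)
    obtain ⟨hue, hu⟩ := mem_erase.mp hu
    exact apply_eq_zero_of_ne hS.1.2.2 hS.2 hu hue.symm (by simp [e])
  · rw [mem_coe, mem_normalFamilies] at hS
    dsimp only
    rw [erase_insert (snoc_zero_one_notMem_extendFamily hS.2.1 0), image_init_extendFamily]

lemma card_filter_exists_last_ne_zero (ℓ : ℕ) :
    #{S ∈ normalFamilies R (n + 1) ℓ | Fin.snoc 0 1 ∉ S ∧ ∃ u ∈ S, u (Fin.last n) ≠ 0} =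
      #(normalFamilies R n ℓ) * ℓ * (Fintype.card R - 1) := by
  let params := (normalFamilies R n ℓ).sigma fun S => S ×ˢ univ.erase (0 : R)
  have hparams : #params = #(normalFamilies R n ℓ) * ℓ * (Fintype.card R - 1) := by
    rw [card_sigma, mul_assoc, ← smul_eq_mul, ← sum_const]
    refine sum_congr rfl fun S hS => ?_
    rw [card_product, (mem_normalFamilies.mp hS).1, card_erase_of_mem (mem_univ _),
      Finset.card_univ]
  have mem_params : ∀ {p : (_ : Finset (Fin n → R)) × (Fin n → R) × R},
      p ∈ params ↔ p.1 ∈ normalFamilies R n ℓ ∧ p.2.1 ∈ p.1 ∧ p.2.2 ≠ 0 := by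
    simp [params]
  rw [← hparams, eq_comm]
  refine card_nbij (fun p => extendFamily p.1 fun x => if x = p.2.1 then p.2.2 else 0)
    (fun p hp => ?_) (fun p hp p' hp' h => ?_) (fun S hS => ?_)
  · obtain ⟨hS, hw, hc⟩ := mem_params.mp hp
    rw [mem_coe, mem_filter]
    refine ⟨extendFamily_mem_normalFamilies hS fun x _ y _ hxy => ?_,
      snoc_zero_one_notMem_extendFamily (mem_normalFamilies.mp hS).2.1 _,
      Fin.snoc p.2.1 p.2.2, mem_extendFamily.mpr ⟨p.2.1, hw, by simp⟩, by simpa using hc⟩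
    by_cases hx : x = p.2.1
    · exact Or.inr (if_neg (hx ▸ hxy.symm))
    · exact Or.inl (if_neg hx)
  · obtain ⟨hS, hw, hc⟩ := mem_params.mp hp
    obtain ⟨h1, h2, h3⟩ := extendFamily_ite_inj hw hc h
    exact Sigma.ext h1 (heq_of_eq (Prod.ext h2 h3))
  · rw [mem_coe, mem_filter] at hS
    obtain ⟨hSN, he, u, hu, hlast⟩ := hS
    exact ⟨⟨S.image Fin.init, Fin.init u, u (Fin.last n)⟩,
      mem_params.mpr ⟨image_init_mem_normalFamilies hSN he, mem_image_of_mem _ hu, hlast⟩,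
      (mem_normalFamilies.mp hSN).2.extendFamily_image_init_ite he hu hlast⟩

lemma card_normalFamilies_succ_succ (ℓ : ℕ) :
    #(normalFamilies R (n + 1) (ℓ + 1)) =
      #(normalFamilies R n (ℓ + 1)) + #(normalFamilies R n ℓ) +
        #(normalFamilies R n (ℓ + 1)) * (ℓ + 1) * (Fintype.card R - 1) := by
  set e : Fin (n + 1) → R := Fin.snoc 0 1
  have hB : {S ∈ normalFamilies R (n + 1) (ℓ + 1) | ¬(∀ u ∈ S, u (Fin.last n) = 0) ∧ e ∈ S} =
      {S ∈ normalFamilies R (n + 1) (ℓ + 1) | e ∈ S} :=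
    filter_congr fun S _ => and_iff_right_of_imp fun he h => by simpa [e] using h e he
  have hC : {S ∈ normalFamilies R (n + 1) (ℓ + 1) | ¬(∀ u ∈ S, u (Fin.last n) = 0) ∧ e ∉ S} =
      {S ∈ normalFamilies R (n + 1) (ℓ + 1) | e ∉ S ∧ ∃ u ∈ S, u (Fin.last n) ≠ 0} :=
    filter_congr fun S _ => by push Not; exact and_comm
  have hsplit := card_filter_add_card_filter_not
    (s := {S ∈ normalFamilies R (n + 1) (ℓ + 1) | ¬∀ u ∈ S, u (Fin.last n) = 0}) (e ∈ ·)
  rw [filter_filter, filter_filter, hB, hC] at hsplit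
  rw [← card_filter_add_card_filter_not (fun S => ∀ u ∈ S, u (Fin.last n) = 0), ← hsplit,
    card_filter_forall_last_eq_zero, card_filter_snoc_zero_one_mem,
    card_filter_exists_last_ne_zero, add_assoc]

lemma card_normalFamilies_zero_right (n : ℕ) : #(normalFamilies R n 0) = 1 := by
  refine card_eq_one.mpr ⟨∅, eq_singleton_iff_unique_mem.mpr ⟨?_, fun S hS => ?_⟩⟩
  · simp [mem_normalFamilies, IsNormalFamily]
  · exact card_eq_zero.mp (mem_normalFamilies.mp hS).1

lemma card_normalFamilies_zero_succ (ℓ : ℕ) : #(normalFamilies R 0 (ℓ + 1)) = 0 := by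
  refine card_eq_zero.mpr (eq_empty_of_forall_notMem fun S hS => ?_)
  obtain ⟨hcard, hS, -⟩ := mem_normalFamilies.mp hS
  obtain ⟨v, hv⟩ := card_pos.mp (by omega : 0 < #S)
  obtain ⟨i, -⟩ := hS hv
  exact i.elim0

lemma card_normalFamilies (n ℓ : ℕ) :
    #(normalFamilies R n ℓ) = closedForm (Fintype.card R - 1) n ℓ := by
  induction n generalizing ℓ with
  | zero =>
    cases ℓ with
    | zero => rw [card_normalFamilies_zero_right, closedForm_zero_right]
    | succ ℓ => rw [card_normalFamilies_zero_succ, closedForm_zero_succ]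
  | succ n ih =>
    cases ℓ with
    | zero => rw [card_normalFamilies_zero_right, closedForm_zero_right]
    | succ ℓ => rw [card_normalFamilies_succ_succ, ih, ih, closedForm_succ_succ]

lemma coe_normalFamilies (n ℓ : ℕ) :
    (normalFamilies R n ℓ : Set (Finset (Fin n → R))) = {S | S.card = ℓ ∧ IsNormalFamily S} := by
  ext S
  exact mem_normalFamilies

end Counting

end Nearfield

theorem count_subgroups_general {R : Type*} [Nearfield R] [Fintype R]
    (n ℓ : ℕ) :
    Set.ncard {T : Set (Fin n → R) | ∃ u : Fin ℓ → Fin n → R,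
        (∀ i, u i ≠ 0) ∧ (∀ i j, i ≠ j → supp (u i) ∩ supp (u j) = ∅) ∧
        T = dirSum u} =
      ∑ d ∈ Finset.range (n - ℓ + 1),
        n.choose d * stirling2 (n - d) ℓ * (Fintype.card R - 1) ^ (n - d - ℓ) := by
  rw [setOf_exists_dirSum_eq_image_dirSumFinset,
    (dirSumFinset_injOn.mono fun _ h => h.2).ncard_image, ← coe_normalFamilies, Set.ncard_coe_finset, card_normalFamilies, stirling2_eq_stirlingSecond,
    sum_range_sub_add_one_eq_closedForm]

/-- The number of `R`-subgroups of `R^n` of dimension `ℓ` equals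
`Σ_{d=0}^{n−ℓ} C(n,d)·S(n−d,ℓ)·(q−1)^{n−d−ℓ}`. -/
theorem count_subgroups {R : Type*} [Nearfield R] [Fintype R]
    (hR : IsProper R) (n ℓ : ℕ) :
    Set.ncard {T : Set (Fin n → R) | ∃ u : Fin ℓ → Fin n → R,
        (∀ i, u i ≠ 0) ∧ (∀ i j, i ≠ j → supp (u i) ∩ supp (u j) = ∅) ∧
        T = dirSum u} =
      ∑ d ∈ Finset.range (n - ℓ + 1),
        n.choose d * stirling2 (n - d) ℓ * (Fintype.card R - 1) ^ (n - d - ℓ) :=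
  count_subgroups_general n ℓ
end
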